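/- Let $(a_1,\dots,a_m)$ be a telescopic sequence with gap set $W=\mathbb{Z}_{\ge0}\setminus(a_1\mathbb{Z}_{\ge0}+\cdots+a_m\mathbb{Z}_{\ge0})$. Then the number of gaps equals $g=\frac{1}{2}\big(1-a_1+\sum_{i=2}^m(d_{i-1}/d_i-1)a_i\big)$, where $d_i=\gcd(a_1,\dots,a_i)$. -/

import Mathlib

/-- `dseq a i = gcd(a 1, …, a i)`. -/
def dseq (a : ℕ → ℕ) (i : ℕ) : ℕ := Finset.gcd (Finset.Icc 1 i) a

/-- membership in the numerical semigroup generated by `a 1, …, a m`. -/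
def InSemigroup (m : ℕ) (a : ℕ → ℕ) (x : ℕ) : Prop :=
  ∃ c : ℕ → ℕ, x = ∑ i ∈ Finset.Icc 1 m, c i * a i

/-- `(a 1, …, a m)` is a telescopic sequence. -/
def Telescopic (m : ℕ) (a : ℕ → ℕ) : Prop :=
  2 ≤ m ∧ (∀ i, 1 ≤ i → i ≤ m → 0 < a i) ∧ dseq a m = 1 ∧
  ∀ i, 2 ≤ i → i ≤ m → ∃ c : ℕ → ℕ,
    a i / dseq a i = ∑ j ∈ Finset.Icc 1 (i - 1), c j * (a j / dseq a (i - 1))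

/-- membership in the restricted exponent set `B(A_m)`. -/
def InB (m : ℕ) (a : ℕ → ℕ) (k : ℕ → ℕ) : Prop :=
  (∀ j, (j = 0 ∨ m < j) → k j = 0) ∧
  ∀ i, 2 ≤ i → i ≤ m → k i ≤ dseq a (i - 1) / dseq a i - 1

/-!
Write `Sₙ` for the semigroup generated by `a₁/dₙ, …, aₙ/dₙ`, so `S₁ = ℕ` and `Sₘ` is the semigroup
of the theorem. With `p = dₙ/dₙ₊₁` and `q = aₙ₊₁/dₙ₊₁`, which are coprime, `Sₙ₊₁ = p Sₙ + q ℕ`, and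
the telescopic condition says `q ∈ Sₙ`. Every integer is uniquely `p u + q t` with `0 ≤ t < p`, and
since `Sₙ + q ⊆ Sₙ` such an integer lies in `p Sₙ + q ℕ` iff `u ∈ Sₙ`. So for each `t` the gaps are
the `p u + q t` with `u` a gap of `Sₙ`, or with `-⌊q t / p⌋ ≤ u < 0`, whence
`g(Sₙ₊₁) = p g(Sₙ) + ∑_{t<p} ⌊q t / p⌋ = p g(Sₙ) + (p - 1)(q - 1)/2`, and induction on `n` gives
the formula.
-/

open Finset

theorem Nat.div_add_div_eq_sub_one_of_add_eq_mul {a b p q : ℕ} (hp : 0 < p) (hab : a + b = p * q)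
    (ha : ¬ p ∣ a) : a / p + b / p = q - 1 := by
  have hmod : p ≤ a % p + b % p := by
    by_contra! hlt
    have h0 : (a % p + b % p) % p = 0 := by rw [← Nat.add_mod, hab, Nat.mul_mod_right]
    rw [Nat.mod_eq_of_lt hlt] at h0
    exact ha (Nat.dvd_of_mod_eq_zero (by omega))
  have := Nat.add_div_eq_of_le_mod_add_mod hmod hp
  rw [hab, Nat.mul_div_cancel_left _ hp] at this
  exact Nat.eq_sub_of_add_eq this.symm

theorem Nat.two_mul_sum_range_mul_div {p q : ℕ} (hpq : p.Coprime q) :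
    2 * ∑ t ∈ range p, q * t / p = (p - 1) * (q - 1) := by
  rcases Nat.eq_zero_or_pos p with rfl | hp
  · simp
  have hpair : ∀ t ∈ Ico 1 p, q * t / p + q * (p - t) / p = q - 1 := by
    intro t ht
    rw [mem_Ico] at ht
    refine Nat.div_add_div_eq_sub_one_of_add_eq_mul hp ?_ fun h => ?_
    · rw [← Nat.mul_add, Nat.add_sub_cancel' ht.2.le, Nat.mul_comm]
    · exact absurd (Nat.le_of_dvd (by omega) (hpq.dvd_of_dvd_mul_left h)) (by omega)
  have hrange : ∑ t ∈ range p, q * t / p = ∑ t ∈ Ico 1 p, q * t / p := by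
    rw [range_eq_Ico, sum_eq_sum_Ico_succ_bot hp]
    simp
  have hreflect : ∑ t ∈ Ico 1 p, q * (p - t) / p = ∑ t ∈ Ico 1 p, q * t / p := by
    rw [sum_Ico_reflect (fun t => q * t / p) 1 (by omega : p ≤ p + 1)]
    congr 1
    ext t; simp only [mem_Ico]; omega
  rw [hrange, two_mul]
  nth_rewrite 2 [← hreflect]
  rw [← sum_add_distrib, sum_congr rfl hpair, sum_const, Nat.card_Ico, smul_eq_mul]

theorem Nat.sub_one_mul_sub_one_add {p q : ℕ} (hp : 0 < p) (hq : 0 < q) :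
    (p - 1) * (q - 1) + p = 1 + (p - 1) * q := by
  obtain ⟨p, rfl⟩ := Nat.exists_eq_add_of_lt hp
  obtain ⟨q, rfl⟩ := Nat.exists_eq_add_of_lt hq
  simp only [Nat.add_sub_cancel]
  ring

theorem Int.eq_and_eq_of_mul_add_mul_eq {p q t t' : ℕ} (hpq : p.Coprime q) (ht : t < p)
    (ht' : t' < p) {u u' : ℤ} (h : p * u + q * t = p * u' + q * t') : t = t' ∧ u = u' := by
  have hdvd : (p : ℤ) ∣ q * ((t : ℤ) - t') := ⟨u' - u, by linear_combination h⟩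
  have htt : (t : ℤ) - t' = 0 :=
    Int.eq_zero_of_abs_lt_dvd ((Nat.isCoprime_iff_coprime.mpr hpq).dvd_of_dvd_mul_left hdvd)
      (by rw [abs_lt]; omega)
  refine ⟨by omega, mul_left_cancel₀ (by omega : (p : ℤ) ≠ 0) ?_⟩
  linear_combination h - q * htt

theorem Int.exists_eq_mul_add_mul {p q : ℕ} (hp : 0 < p) (hpq : p.Coprime q) (n : ℤ) :
    ∃ t < p, ∃ u : ℤ, n = p * u + q * t := by
  obtain ⟨α, β, hαβ⟩ := Nat.isCoprime_iff_coprime.mpr hpq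
  obtain ⟨t, ht⟩ := Int.eq_ofNat_of_zero_le (Int.emod_nonneg (n * β) (by omega : (p : ℤ) ≠ 0))
  have htp : (t : ℤ) < p := ht ▸ Int.emod_lt_of_pos _ (by omega)
  refine ⟨t, by omega, n * α + q * (n * β / p), ?_⟩
  linear_combination (-n) * hαβ - q * (Int.mul_ediv_add_emod (n * β) p) + q * ht

def glue (S : Set ℕ) (p q : ℕ) : Set ℕ := {n | ∃ s ∈ S, ∃ t, n = p * s + q * t}

-- `⟨t, u⟩` stands for the integer `p u + q t`; a negative `u` counts as a gap of `S`.
def glueGapIndex (S : Set ℕ) (p q : ℕ) : Set ((_ : ℕ) × ℤ) :=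
  {x | x.1 < p ∧ 0 ≤ p * x.2 + q * x.1 ∧ ¬ (0 ≤ x.2 ∧ x.2.toNat ∈ S)}

section Glue

variable {S : Set ℕ} {p q : ℕ}

theorem add_mul_mem_of_add_mem (hSq : ∀ s ∈ S, s + q ∈ S) {s : ℕ} (hs : s ∈ S) (k : ℕ) :
    s + q * k ∈ S := by
  induction k with
  | zero => simpa using hs
  | succ k ih => simpa [Nat.mul_succ, ← Nat.add_assoc] using hSq _ ih

theorem mem_glue_iff (hpq : p.Coprime q) (hSq : ∀ s ∈ S, s + q ∈ S) {n t : ℕ} (ht : t < p)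
    {u : ℤ} (hn : (n : ℤ) = p * u + q * t) : n ∈ glue S p q ↔ 0 ≤ u ∧ u.toNat ∈ S := by
  constructor
  · rintro ⟨s, hs, t', rfl⟩
    obtain ⟨k, r, hr, rfl⟩ : ∃ k r, r < p ∧ t' = p * k + r :=
      ⟨t' / p, t' % p, Nat.mod_lt _ (by omega), (Nat.div_add_mod t' p).symm⟩
    obtain ⟨-, hu⟩ := Int.eq_and_eq_of_mul_add_mul_eq (u := ↑(s + q * k)) (u' := u) hpq hr ht
      (by push_cast at hn ⊢; linear_combination hn)
    subst hu
    exact ⟨by positivity, by rw [Int.toNat_natCast]; exact add_mul_mem_of_add_mem hSq hs k⟩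
  · rintro ⟨hu, huS⟩
    refine ⟨u.toNat, huS, t, ?_⟩
    rw [← Int.toNat_of_nonneg hu] at hn
    exact_mod_cast hn

theorem compl_glue_eq_image (hp : 0 < p) (hpq : p.Coprime q) (hSq : ∀ s ∈ S, s + q ∈ S) :
    (glue S p q)ᶜ = (fun x : (_ : ℕ) × ℤ => (p * x.2 + q * x.1).toNat) '' glueGapIndex S p q := by
  ext n
  constructor
  · intro hn
    obtain ⟨t, ht, u, hu⟩ := Int.exists_eq_mul_add_mul hp hpq n
    refine ⟨⟨t, u⟩, ⟨ht, by dsimp only; omega, (mem_glue_iff hpq hSq ht hu).not.mp hn⟩, ?_⟩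
    simp [← hu]
  · rintro ⟨⟨t, u⟩, ⟨ht, hnonneg, hgap⟩, rfl⟩
    exact (mem_glue_iff hpq hSq ht (Int.toNat_of_nonneg hnonneg)).not.mpr hgap

theorem injOn_glueGapIndex (hpq : p.Coprime q) :
    Set.InjOn (fun x : (_ : ℕ) × ℤ => (p * x.2 + q * x.1).toNat) (glueGapIndex S p q) := by
  rintro ⟨t, u⟩ ⟨ht, hu, -⟩ ⟨t', u'⟩ ⟨ht', hu', -⟩ h
  dsimp only at ht ht' hu hu' h
  obtain ⟨rfl, rfl⟩ := Int.eq_and_eq_of_mul_add_mul_eq (u := u) (u' := u') hpq ht ht' (by omega)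
  rfl

theorem glueGapIndex_eq_coe (hS : Sᶜ.Finite) :
    glueGapIndex S p q = ↑((range p).sigma fun t =>
      Ico (-(q * t / p : ℕ) : ℤ) 0 ∪ hS.toFinset.map Nat.castEmbedding) := by
  ext ⟨t, u⟩
  simp only [glueGapIndex, Set.mem_ofPred_eq, coe_sigma, Set.mem_sigma_iff, coe_range, Set.mem_Iio,
    coe_union, coe_Ico, coe_map, Set.mem_union, Set.mem_Ico, Set.mem_image, Set.Finite.coe_toFinset,
    Set.mem_compl_iff, Nat.castEmbedding_apply]
  refine and_congr_right fun ht => ?_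
  rcases lt_or_ge u 0 with hu | hu
  · have hfloor : -((q * t / p : ℕ) : ℤ) ≤ u ↔ 0 ≤ p * u + q * t := by
      rw [neg_le, Int.natCast_div, Int.le_ediv_iff_mul_le (by omega)]
      push_cast; constructor <;> intro h <;> linarith
    simp only [hfloor, hu, and_true, not_le.mpr hu, false_and, not_false_eq_true]
    constructor
    · exact Or.inl
    · rintro (h | ⟨n, -, rfl⟩)
      · exact h
      · omega
  · lift u to ℕ using hu
    have hu : ¬ (u : ℤ) < 0 := by omega
    simp only [hu, and_false, false_or, Int.toNat_natCast, Nat.cast_inj, exists_eq_right,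
      Nat.cast_nonneg, true_and]
    exact and_iff_right (by positivity)

theorem ncard_compl_glue (hp : 0 < p) (hpq : p.Coprime q) (hSq : ∀ s ∈ S, s + q ∈ S)
    (hS : Sᶜ.Finite) :
    (glue S p q)ᶜ.Finite ∧ (glue S p q)ᶜ.ncard = p * Sᶜ.ncard + ∑ t ∈ range p, q * t / p := by
  rw [compl_glue_eq_image hp hpq hSq]
  refine ⟨?_, ?_⟩
  · rw [glueGapIndex_eq_coe hS]
    exact (finite_toSet _).image _
  · rw [(injOn_glueGapIndex hpq).ncard_image, glueGapIndex_eq_coe hS, Set.ncard_coe_finset,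
      card_sigma, Set.ncard_eq_toFinset_card _ hS]
    have hcard : ∀ t ∈ range p, #(Ico (-(q * t / p : ℕ) : ℤ) 0 ∪
        hS.toFinset.map Nat.castEmbedding) = q * t / p + #hS.toFinset := by
      intro t _
      rw [card_union_of_disjoint, Int.card_Ico, card_map, zero_sub, neg_neg, Int.toNat_natCast]
      rw [disjoint_left]
      simp only [mem_Ico, mem_map, Nat.castEmbedding_apply]
      rintro _ ⟨-, hneg⟩ ⟨n, -, rfl⟩
      omega
    rw [sum_congr rfl hcard, sum_add_distrib, sum_const, card_range, smul_eq_mul, add_comm]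

theorem two_mul_ncard_compl_glue (hp : 0 < p) (hpq : p.Coprime q)
    (hSq : ∀ s ∈ S, s + q ∈ S) (hS : Sᶜ.Finite) :
    (glue S p q)ᶜ.Finite ∧ 2 * (glue S p q)ᶜ.ncard = p * (2 * Sᶜ.ncard) + (p - 1) * (q - 1) := by
  obtain ⟨hfin, hcard⟩ := ncard_compl_glue hp hpq hSq hS
  refine ⟨hfin, ?_⟩
  rw [hcard, Nat.mul_add, ← Nat.two_mul_sum_range_mul_div hpq]
  ring

end Glue

section InSemigroup

variable {n : ℕ} {b : ℕ → ℕ} {x y : ℕ}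

theorem InSemigroup.add (hx : InSemigroup n b x) (hy : InSemigroup n b y) :
    InSemigroup n b (x + y) := by
  obtain ⟨c, rfl⟩ := hx
  obtain ⟨c', rfl⟩ := hy
  exact ⟨c + c', by simp only [Pi.add_apply, Nat.add_mul, sum_add_distrib]⟩

theorem inSemigroup_congr {b' : ℕ → ℕ} (h : ∀ i ∈ Icc 1 n, b i = b' i) :
    InSemigroup n b x ↔ InSemigroup n b' x := by
  have hsum (c : ℕ → ℕ) : ∑ i ∈ Icc 1 n, c i * b i = ∑ i ∈ Icc 1 n, c i * b' i :=
    sum_congr rfl fun i hi => by rw [h i hi]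
  simp only [InSemigroup, hsum]

theorem inSemigroup_mul_iff {p : ℕ} :
    InSemigroup n (fun i => p * b i) x ↔ ∃ s, InSemigroup n b s ∧ x = p * s := by
  have hsum (c : ℕ → ℕ) : ∑ i ∈ Icc 1 n, c i * (p * b i) = p * ∑ i ∈ Icc 1 n, c i * b i := by
    rw [mul_sum]; exact sum_congr rfl fun i _ => by ring
  simp only [InSemigroup, hsum]
  constructor
  · rintro ⟨c, rfl⟩; exact ⟨_, ⟨c, rfl⟩, rfl⟩
  · rintro ⟨_, ⟨c, rfl⟩, rfl⟩; exact ⟨c, rfl⟩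

theorem inSemigroup_succ_iff :
    InSemigroup (n + 1) b x ↔ ∃ s, InSemigroup n b s ∧ ∃ t, x = s + t * b (n + 1) := by
  constructor
  · rintro ⟨c, rfl⟩
    exact ⟨_, ⟨c, rfl⟩, c (n + 1), sum_Icc_succ_top (by omega) _⟩
  · rintro ⟨_, ⟨c, rfl⟩, t, rfl⟩
    refine ⟨Function.update c (n + 1) t, ?_⟩
    rw [sum_Icc_succ_top (by omega), Function.update_self]
    congr 1
    exact sum_congr rfl fun i hi => by
      rw [Function.update_of_ne (by simp only [mem_Icc] at hi; omega)]

end InSemigroup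

section Telescopic

variable {a : ℕ → ℕ} {n : ℕ}

theorem dseq_succ (a : ℕ → ℕ) (n : ℕ) : dseq a (n + 1) = Nat.gcd (dseq a n) (a (n + 1)) := by
  rw [dseq, ← insert_Icc_right_eq_Icc_add_one (by omega), gcd_insert, Nat.gcd_comm]
  rfl

theorem dseq_one : dseq a 1 = a 1 := by
  simp [dseq]

theorem dseq_dvd {i : ℕ} (hi : i ∈ Icc 1 n) : dseq a n ∣ a i :=
  Finset.gcd_dvd hi

theorem dseq_succ_dvd : dseq a (n + 1) ∣ dseq a n :=
  dseq_succ a n ▸ Nat.gcd_dvd_left _ _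

theorem dseq_pos (ha : 0 < a 1) (hn : 1 ≤ n) : 0 < dseq a n :=
  Nat.pos_of_dvd_of_pos (dseq_dvd (by simp only [mem_Icc]; omega)) ha

theorem div_dseq_succ {i : ℕ} (hi : i ∈ Icc 1 n) :
    a i / dseq a (n + 1) = dseq a n / dseq a (n + 1) * (a i / dseq a n) := by
  rw [Nat.mul_comm, Nat.div_mul_div (dseq_dvd hi) dseq_succ_dvd]

theorem coprime_div_dseq_succ (ha : 0 < a (n + 1)) :
    (dseq a n / dseq a (n + 1)).Coprime (a (n + 1) / dseq a (n + 1)) := by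
  rw [dseq_succ a n]
  exact Nat.coprime_div_gcd_div_gcd (Nat.gcd_pos_of_pos_right _ ha)

def reducedSemigroup (a : ℕ → ℕ) (n : ℕ) : Set ℕ :=
  {x | InSemigroup n (fun i => a i / dseq a n) x}

theorem reducedSemigroup_one (ha : 0 < a 1) : reducedSemigroup a 1 = Set.univ :=
  Set.eq_univ_of_forall fun x => ⟨fun _ => x, by simp [dseq_one, Nat.div_self ha]⟩

theorem reducedSemigroup_succ :
    reducedSemigroup a (n + 1) =
      glue (reducedSemigroup a n) (dseq a n / dseq a (n + 1)) (a (n + 1) / dseq a (n + 1)) := by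
  ext x
  simp only [reducedSemigroup, glue, Set.mem_ofPred_eq, inSemigroup_succ_iff,
    inSemigroup_congr (fun i hi => div_dseq_succ hi), inSemigroup_mul_iff]
  constructor
  · rintro ⟨_, ⟨s, hs, rfl⟩, t, rfl⟩
    exact ⟨s, hs, t, by ring⟩
  · rintro ⟨s, hs, t, rfl⟩
    exact ⟨_, ⟨s, hs, rfl⟩, t, by ring⟩

theorem reducedSemigroup_genus_formula {m : ℕ} (hpos : ∀ i, 1 ≤ i → i ≤ m → 0 < a i)
    (htel : ∀ i, 2 ≤ i → i ≤ m → ∃ c : ℕ → ℕ,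
      a i / dseq a i = ∑ j ∈ Icc 1 (i - 1), c j * (a j / dseq a (i - 1)))
    (hn : 1 ≤ n) (hnm : n ≤ m) :
    (reducedSemigroup a n)ᶜ.Finite ∧ 2 * (reducedSemigroup a n)ᶜ.ncard + a 1 / dseq a n =
      1 + ∑ i ∈ Icc 2 n, (dseq a (i - 1) / dseq a i - 1) * (a i / dseq a n) := by
  induction n, hn using Nat.le_induction with
  | base =>
    have ha1 := hpos 1 le_rfl hnm
    simp [reducedSemigroup_one ha1, dseq_one, Nat.div_self ha1]
  | succ n hn ih =>
    obtain ⟨hfin, hgenus⟩ := ih (by omega)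
    set p := dseq a n / dseq a (n + 1) with hp_def
    set q := a (n + 1) / dseq a (n + 1) with hq_def
    have ha1 : 0 < a 1 := hpos 1 le_rfl (by omega)
    have han : 0 < a (n + 1) := hpos (n + 1) (by omega) hnm
    have hp : 0 < p := Nat.div_pos (Nat.le_of_dvd (dseq_pos ha1 hn) dseq_succ_dvd)
      (dseq_pos ha1 (by omega))
    have hq : 0 < q :=
      Nat.div_pos (Nat.le_of_dvd han (dseq_dvd (by simp))) (dseq_pos ha1 (by omega))
    have hqS : q ∈ reducedSemigroup a n := by
      obtain ⟨c, hc⟩ := htel (n + 1) (by omega) hnm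
      rw [Nat.add_sub_cancel] at hc
      exact ⟨c, hc⟩
    obtain ⟨hfin', hcard⟩ := two_mul_ncard_compl_glue (S := reducedSemigroup a n) hp
      (coprime_div_dseq_succ han) (fun s hs => hs.add hqS) hfin
    have hsum : ∑ i ∈ Icc 2 n, (dseq a (i - 1) / dseq a i - 1) * (a i / dseq a (n + 1)) =
        p * ∑ i ∈ Icc 2 n, (dseq a (i - 1) / dseq a i - 1) * (a i / dseq a n) := by
      rw [mul_sum]
      refine sum_congr rfl fun i hi => ?_
      rw [div_dseq_succ (by simp only [mem_Icc] at hi ⊢; omega)]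
      ring
    rw [reducedSemigroup_succ, ← hp_def, ← hq_def]
    refine ⟨hfin', ?_⟩
    rw [hcard, div_dseq_succ (i := 1) (by simp; omega), sum_Icc_succ_top (by omega), hsum,
      Nat.add_sub_cancel, ← hp_def, ← hq_def]
    nlinarith [hgenus, Nat.sub_one_mul_sub_one_add hp hq]

end Telescopic

/-- Genus formula for telescopic semigroups: 2g + a₁ = 1 + Σ (d_{i-1}/d_i - 1) a_i. -/
theorem stmt2 (m : ℕ) (a : ℕ → ℕ) (h : Telescopic m a) :
    2 * {n : ℕ | ¬ InSemigroup m a n}.ncard + a 1 =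
      1 + ∑ i ∈ Finset.Icc 2 m, (dseq a (i - 1) / dseq a i - 1) * a i := by
  obtain ⟨hm, hpos, hdm, htel⟩ := h
  have hS : reducedSemigroup a m = {n | InSemigroup m a n} := by
    simp only [reducedSemigroup, hdm, Nat.div_one]
  simpa only [hS, hdm, Nat.div_one, Set.compl_ofPred] using
    (reducedSemigroup_genus_formula hpos htel (by omega) le_rfl).2
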